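/- Let n be an integer, h_A = (−1/2; 0, 1; −1) and h_D = (−(n+1)/2; −1, −n; 0) in G. For every g = (a; b, c; d) ∈ G with b ∈ ℤ, there exist unique integers m, k and unique rational a′ and integer d′ such that h_A^m · g · h_D^k = (a′; 0, 0; d′). Moreover k = b and m = bn − c. -/

import Mathlib

/-- The grading group `G` of the torus algebra: quadruples `(a; b, c; d)` with
`a, b, c ∈ (1/2)ℤ`, `d ∈ ℤ`, and `b + c ∈ ℤ`. -/
structure GGrp where
  a : ℚ
  b : ℚ
  c : ℚ
  d : ℤ
  ha : ∃ m : ℤ, a = m / 2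
  hb : ∃ m : ℤ, b = m / 2
  hc : ∃ m : ℤ, c = m / 2
  hbc : ∃ m : ℤ, b + c = m

namespace GGrp

theorem ext' {x y : GGrp} (h1 : x.a = y.a) (h2 : x.b = y.b) (h3 : x.c = y.c)
    (h4 : x.d = y.d) : x = y := by
  cases x; cases y; simp_all

/-- The group law `(a₁; b₁, c₁; d₁)·(a₂; b₂, c₂; d₂) =
`(a₁ + a₂ + b₁c₂ − c₁b₂; b₁ + b₂, c₁ + c₂; d₁ + d₂)`. -/
def mul (x y : GGrp) : GGrp where
  a := x.a + y.a + (x.b * y.c - x.c * y.b)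
  b := x.b + y.b
  c := x.c + y.c
  d := x.d + y.d
  ha := by
    obtain ⟨m1, hm1⟩ := x.ha
    obtain ⟨m2, hm2⟩ := y.ha
    obtain ⟨p1, hp1⟩ := x.hb
    obtain ⟨p2, hp2⟩ := y.hb
    obtain ⟨k1, hk1⟩ := x.hbc
    obtain ⟨k2, hk2⟩ := y.hbc
    refine ⟨m1 + m2 + (p1 * k2 - k1 * p2), ?_⟩
    have hc1 : x.c = (k1 : ℚ) - x.b := by linarith
    have hc2 : y.c = (k2 : ℚ) - y.b := by linarith
    rw [hm1, hm2, hc1, hc2, hp1, hp2]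
    push_cast
    ring
  hb := by
    obtain ⟨p1, hp1⟩ := x.hb
    obtain ⟨p2, hp2⟩ := y.hb
    exact ⟨p1 + p2, by rw [hp1, hp2]; push_cast; ring⟩
  hc := by
    obtain ⟨q1, hq1⟩ := x.hc
    obtain ⟨q2, hq2⟩ := y.hc
    exact ⟨q1 + q2, by rw [hq1, hq2]; push_cast; ring⟩
  hbc := by
    obtain ⟨k1, hk1⟩ := x.hbc
    obtain ⟨k2, hk2⟩ := y.hbc
    exact ⟨k1 + k2, by push_cast; linarith⟩

/-- The identity element `(0; 0, 0; 0)`. -/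
def one : GGrp :=
  ⟨0, 0, 0, 0, ⟨0, by norm_num⟩, ⟨0, by norm_num⟩, ⟨0, by norm_num⟩, ⟨0, by norm_num⟩⟩

/-- The inverse `(−a; −b, −c; −d)`. -/
def inv (x : GGrp) : GGrp where
  a := -x.a
  b := -x.b
  c := -x.c
  d := -x.d
  ha := by obtain ⟨m, hm⟩ := x.ha; exact ⟨-m, by rw [hm]; push_cast; ring⟩
  hb := by obtain ⟨m, hm⟩ := x.hb; exact ⟨-m, by rw [hm]; push_cast; ring⟩
  hc := by obtain ⟨m, hm⟩ := x.hc; exact ⟨-m, by rw [hm]; push_cast; ring⟩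
  hbc := by obtain ⟨m, hm⟩ := x.hbc; exact ⟨-m, by push_cast; linarith⟩

instance : Mul GGrp := ⟨mul⟩
instance : One GGrp := ⟨one⟩
instance : Inv GGrp := ⟨inv⟩

@[simp] lemma mul_a (x y : GGrp) : (x * y).a = x.a + y.a + (x.b * y.c - x.c * y.b) := rfl
@[simp] lemma mul_b (x y : GGrp) : (x * y).b = x.b + y.b := rfl
@[simp] lemma mul_c (x y : GGrp) : (x * y).c = x.c + y.c := rfl
@[simp] lemma mul_d (x y : GGrp) : (x * y).d = x.d + y.d := rfl
@[simp] lemma one_a : (1 : GGrp).a = 0 := rfl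
@[simp] lemma one_b : (1 : GGrp).b = 0 := rfl
@[simp] lemma one_c : (1 : GGrp).c = 0 := rfl
@[simp] lemma one_d : (1 : GGrp).d = 0 := rfl
@[simp] lemma inv_a (x : GGrp) : (x⁻¹).a = -x.a := rfl
@[simp] lemma inv_b (x : GGrp) : (x⁻¹).b = -x.b := rfl
@[simp] lemma inv_c (x : GGrp) : (x⁻¹).c = -x.c := rfl
@[simp] lemma inv_d (x : GGrp) : (x⁻¹).d = -x.d := rfl

instance : Group GGrp where
  mul_assoc x y z := ext' (by simp; ring) (by simp; ring) (by simp; ring) (by simp; ring)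
  one_mul x := ext' (by simp) (by simp) (by simp) (by simp)
  mul_one x := ext' (by simp) (by simp) (by simp) (by simp)
  inv_mul_cancel x := ext' (by simp; ring) (by simp) (by simp) (by simp)

end GGrp

/-- `h_A = (−1/2; 0, 1; −1)`. -/
def hA : GGrp :=
  ⟨-1/2, 0, 1, -1, ⟨-1, by norm_num⟩, ⟨0, by norm_num⟩, ⟨2, by norm_num⟩, ⟨1, by norm_num⟩⟩

/-- `h_D = (−(n+1)/2; −1, −n; 0)`. -/
def hD (n : ℤ) : GGrp :=
  ⟨-((n : ℚ) + 1) / 2, -1, -(n : ℚ), 0,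
    ⟨-(n + 1), by push_cast; ring⟩, ⟨-2, by norm_num⟩,
    ⟨-2 * n, by push_cast; ring⟩, ⟨-1 - n, by push_cast; ring⟩⟩

/-! The `b`- and `c`-coordinates are additive on `G`, so those of `h_A^m · g · h_D^k` are
`b - k` and `c + m - kn`. Both vanish exactly for `k = b` and `m = bn - c`, which are integers
once `b` is; the remaining coordinates `a′, d′` are then determined by `m` and `k`. -/

namespace GGrp

def bHom : GGrp →* Multiplicative ℚ where
  toFun x := .ofAdd x.b
  map_one' := rfl
  map_mul' _ _ := rfl

def cHom : GGrp →* Multiplicative ℚ where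
  toFun x := .ofAdd x.c
  map_one' := rfl
  map_mul' _ _ := rfl

@[simp] lemma zpow_b (x : GGrp) (m : ℤ) : (x ^ m).b = m * x.b := by
  change Multiplicative.toAdd (bHom (x ^ m)) = _
  rw [map_zpow, toAdd_zpow, zsmul_eq_mul]
  rfl

@[simp] lemma zpow_c (x : GGrp) (m : ℤ) : (x ^ m).c = m * x.c := by
  change Multiplicative.toAdd (cHom (x ^ m)) = _
  rw [map_zpow, toAdd_zpow, zsmul_eq_mul]
  rfl

lemma exists_int_c_eq_of_b_eq_int (g : GGrp) {B : ℤ} (hB : g.b = B) : ∃ C : ℤ, g.c = C := by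
  obtain ⟨K, hK⟩ := g.hbc
  exact ⟨K - B, by push_cast; linarith⟩

end GGrp

lemma hA_zpow_mul_mul_hD_zpow_b_c_eq_zero_iff (n m k : ℤ) (g : GGrp) :
    (hA ^ m * g * hD n ^ k).b = 0 ∧ (hA ^ m * g * hD n ^ k).c = 0 ↔
      (k : ℚ) = g.b ∧ (m : ℚ) = g.b * n - g.c := by
  have hb : (hA ^ m * g * hD n ^ k).b = g.b - k := by simp [hA, hD, sub_eq_add_neg]
  have hc : (hA ^ m * g * hD n ^ k).c = m + g.c - k * n := by simp [hA, hD]; ring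
  rw [hb, hc]
  constructor <;> rintro ⟨hk, hm⟩ <;>
    exact ⟨by linear_combination -hk, by linear_combination hm - n * hk⟩

lemma hA_zpow_mul_mul_hD_zpow_b_c_eq_zero_iff_of_int (n m k : ℤ) {g : GGrp} {B C : ℤ}
    (hB : g.b = B) (hC : g.c = C) :
    (hA ^ m * g * hD n ^ k).b = 0 ∧ (hA ^ m * g * hD n ^ k).c = 0 ↔
      k = B ∧ m = B * n - C := by
  rw [hA_zpow_mul_mul_hD_zpow_b_c_eq_zero_iff, hB, hC]
  norm_cast

/-- For every `g = (a; b, c; d) ∈ G` with `b ∈ ℤ`, there are unique integers `m, k`,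
a unique rational `a′` and a unique integer `d′` with
`h_A^m · g · h_D^k = (a′; 0, 0; d′)`; moreover `k = b` and `m = bn − c`. -/
theorem double_coset_normalization (n : ℤ) (g : GGrp) (hgb : ∃ B : ℤ, g.b = (B : ℚ)) :
    (∃! x : ℤ × ℤ × ℚ × ℤ,
      (hA ^ x.1 * g * hD n ^ x.2.1).a = x.2.2.1 ∧
      (hA ^ x.1 * g * hD n ^ x.2.1).b = 0 ∧
      (hA ^ x.1 * g * hD n ^ x.2.1).c = 0 ∧
      (hA ^ x.1 * g * hD n ^ x.2.1).d = x.2.2.2) ∧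
    (∀ m k : ℤ, (hA ^ m * g * hD n ^ k).b = 0 → (hA ^ m * g * hD n ^ k).c = 0 →
      (k : ℚ) = g.b ∧ (m : ℚ) = g.b * (n : ℚ) - g.c) := by
  obtain ⟨B, hB⟩ := hgb
  obtain ⟨C, hC⟩ := g.exists_int_c_eq_of_b_eq_int hB
  refine ⟨⟨(B * n - C, B, (hA ^ (B * n - C) * g * hD n ^ B).a,
      (hA ^ (B * n - C) * g * hD n ^ B).d), ?_, ?_⟩, ?_⟩
  · obtain ⟨hb, hc⟩ :=
      (hA_zpow_mul_mul_hD_zpow_b_c_eq_zero_iff_of_int n (B * n - C) B hB hC).2 ⟨rfl, rfl⟩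
    exact ⟨rfl, hb, hc, rfl⟩
  · rintro ⟨m, k, a', d'⟩ ⟨ha, hb, hc, hd⟩
    dsimp only at ha hb hc hd
    obtain ⟨rfl, rfl⟩ :=
      (hA_zpow_mul_mul_hD_zpow_b_c_eq_zero_iff_of_int n m k hB hC).1 ⟨hb, hc⟩
    subst ha hd
    rfl
  · exact fun m k hb hc ↦ (hA_zpow_mul_mul_hD_zpow_b_c_eq_zero_iff n m k g).1 ⟨hb, hc⟩
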